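/- Let (Z_n)_{n≥0} be a Jirina process with branching mechanism F started at x ≥ 0, and let η be the largest fixed point of F. Then the extinction probability satisfies P_x(lim_n Z_n = 0) = e^{−η x}, and moreover the events {Σ_{n≥0} Z_n < ∞} and {lim_n Z_n = 0} coincide almost surely. -/

import Mathlib

/-!
Write `F` for the Laplace exponent. Given the first `n + 1` subordinators, `Z (n + 1)` is an
independent subordinator evaluated at the time `Z n`, so `E[H e^{-β Z (n+1)}] = E[H e^{-F(β) Z n}]`
for every `H` depending only on those subordinators. Iterating,
`E e^{-θ ∑_{i<n} Z i - β Z n} = e^{-x g^[n] β}` with `g y = θ + F y`.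

With `θ = 0` and `β = η` this equals `e^{-ηx}` for every `n`, and Fatou's lemma gives
`P(Z n → 0) ≤ e^{-ηx}`. Since `F` is sublinear at infinity and `η` is its largest fixed point,
`F u < u` for `u > η`; with `θ = u - F u` the iterates `g^[n] 0` stay below the fixed point `u`
of `g`, so `P(∑ Z n < ∞) ≥ E e^{-θ ∑ Z n} ≥ e^{-ux}`. Letting `u ↓ η` and using
`{∑ Z n < ∞} ⊆ {Z n → 0}` squeezes both events to probability `e^{-ηx}`, so they agree a.s.

Evaluating a path at the random time `Z n` is not a measurable operation on path space. It is
replaced by the right limit along dyadic times, which is jointly measurable and equals the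
evaluation almost surely, because the left and right limits at `Z n` have the same Laplace
transform.
-/

open MeasureTheory ProbabilityTheory Filter

/-- The Laplace exponent `F(λ) = ∫_{(0,∞]} (1 − e^{−λr}) Λ(dr)` of a driftless subordinator,
with `c = Λ({∞})` the mass at infinity. -/
noncomputable def laplaceExpF (Λ : Measure ℝ) (c : ℝ) (l : ℝ) : ℝ :=
  (∫⁻ r in Set.Ioi (0 : ℝ), ENNReal.ofReal (1 - Real.exp (-(l * r))) ∂Λ).toReal +
    (if l = 0 then 0 else c)

open scoped ENNReal Topology

noncomputable def expNeg (y : ℝ) : ℝ≥0∞ := ENNReal.ofReal (Real.exp (-y))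

lemma expNeg_add (a b : ℝ) : expNeg (a + b) = expNeg a * expNeg b := by
  rw [expNeg, expNeg, expNeg, neg_add, Real.exp_add, ENNReal.ofReal_mul (Real.exp_pos _).le]

@[simp] lemma expNeg_zero : expNeg 0 = 1 := by simp [expNeg]

lemma expNeg_le_one {y : ℝ} (hy : 0 ≤ y) : expNeg y ≤ 1 :=
  ENNReal.ofReal_le_one.2 (Real.exp_le_one_iff.2 (by linarith))

lemma expNeg_strictAnti : StrictAnti expNeg := fun _ _ h =>
  (ENNReal.ofReal_lt_ofReal_iff (Real.exp_pos _)).2 (Real.exp_lt_exp.2 (neg_lt_neg h))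

@[fun_prop] lemma continuous_expNeg : Continuous expNeg :=
  ENNReal.continuous_ofReal.comp (Real.continuous_exp.comp continuous_neg)

@[fun_prop] lemma measurable_expNeg : Measurable expNeg := continuous_expNeg.measurable

lemma tendsto_expNeg_atTop : Tendsto expNeg atTop (𝓝 0) := by
  have := (ENNReal.continuous_ofReal.tendsto 0).comp
    (Real.tendsto_exp_atBot.comp tendsto_neg_atTop_atBot)
  rwa [ENNReal.ofReal_zero] at this

section LaplaceExponent

variable {Λ : Measure ℝ} {c : ℝ}

lemma one_sub_exp_neg_mul_le_max_mul_min (l : ℝ) {r : ℝ} (hr : 0 ≤ r) :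
    1 - Real.exp (-(l * r)) ≤ max 1 l * min 1 r := by
  have h1 : 1 - Real.exp (-(l * r)) ≤ 1 := by linarith [Real.exp_pos (-(l * r))]
  have h2 : 1 - Real.exp (-(l * r)) ≤ l * r := by linarith [Real.add_one_le_exp (-(l * r))]
  rcases le_total r 1 with h | h
  · rw [min_eq_right h]; nlinarith [le_max_right 1 l]
  · rw [min_eq_left h, mul_one]; linarith [le_max_left 1 l]

lemma laplaceExpF_nonneg (hc : 0 ≤ c) (l : ℝ) : 0 ≤ laplaceExpF Λ c l := by
  unfold laplaceExpF
  split_ifs <;> positivity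

variable (hΛ : ∫⁻ r in Set.Ioi (0 : ℝ), ENNReal.ofReal (min 1 r) ∂Λ ≠ ∞)
include hΛ

lemma lintegral_one_sub_exp_ne_top (l : ℝ) :
    ∫⁻ r in Set.Ioi (0 : ℝ), ENNReal.ofReal (1 - Real.exp (-(l * r))) ∂Λ ≠ ∞ := by
  refine ne_top_of_le_ne_top (ENNReal.mul_ne_top (ENNReal.ofReal_ne_top (r := max 1 l)) hΛ) ?_
  rw [← lintegral_const_mul' _ _ ENNReal.ofReal_ne_top]
  refine setLIntegral_mono' measurableSet_Ioi fun r hr => ?_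
  rw [← ENNReal.ofReal_mul (by positivity)]
  exact ENNReal.ofReal_le_ofReal (one_sub_exp_neg_mul_le_max_mul_min l (le_of_lt hr))

lemma monotoneOn_laplaceExpF (hc : 0 ≤ c) : MonotoneOn (laplaceExpF Λ c) (Set.Ici 0) := by
  intro a ha b hb hab
  have hI : ∫⁻ r in Set.Ioi (0 : ℝ), ENNReal.ofReal (1 - Real.exp (-(a * r))) ∂Λ ≤
      ∫⁻ r in Set.Ioi (0 : ℝ), ENNReal.ofReal (1 - Real.exp (-(b * r))) ∂Λ := by
    refine setLIntegral_mono' measurableSet_Ioi fun r hr => ENNReal.ofReal_le_ofReal ?_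
    have : Real.exp (-(b * r)) ≤ Real.exp (-(a * r)) := by
      gcongr; exact le_of_lt hr
    linarith
  have hite : (if a = 0 then 0 else c) ≤ if b = 0 then 0 else c := by
    by_cases ha0 : a = 0
    · simp only [ha0, if_true]; split_ifs <;> simp [hc]
    · have hb0 : b ≠ 0 := (lt_of_lt_of_le (lt_of_le_of_ne ha (Ne.symm ha0)) hab).ne'
      simp [ha0, hb0]
  exact add_le_add (ENNReal.toReal_mono (lintegral_one_sub_exp_ne_top hΛ b) hI) hite

lemma continuous_lintegral_one_sub_exp :
    Continuous fun l : ℝ =>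
      ∫⁻ r in Set.Ioi (0 : ℝ), ENNReal.ofReal (1 - Real.exp (-(l * r))) ∂Λ := by
  refine continuous_iff_continuousAt.2 fun a => ?_
  refine tendsto_lintegral_filter_of_dominated_convergence
    (fun r => ENNReal.ofReal (max 1 (|a| + 1)) * ENNReal.ofReal (min 1 r)) ?_ ?_ ?_ ?_
  · exact Eventually.of_forall fun l => by fun_prop
  · filter_upwards [eventually_lt_nhds (lt_of_le_of_lt (le_abs_self a) (lt_add_one |a|))] with l hl
    refine (ae_restrict_iff' measurableSet_Ioi).2 (Eventually.of_forall fun r hr => ?_)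
    rw [← ENNReal.ofReal_mul (by positivity)]
    refine ENNReal.ofReal_le_ofReal ((one_sub_exp_neg_mul_le_max_mul_min l (le_of_lt hr)).trans ?_)
    gcongr
    exact le_min zero_le_one (le_of_lt hr)
  · rw [lintegral_const_mul' _ _ ENNReal.ofReal_ne_top]
    exact ENNReal.mul_ne_top ENNReal.ofReal_ne_top hΛ
  · exact Eventually.of_forall fun r => ENNReal.continuous_ofReal.continuousAt.comp
      (by fun_prop : Continuous fun l : ℝ => 1 - Real.exp (-(l * r))).continuousAt

lemma continuousOn_laplaceExpF : ContinuousOn (laplaceExpF Λ c) (Set.Ioi 0) := by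
  have hcont : Continuous fun l : ℝ =>
      (∫⁻ r in Set.Ioi (0 : ℝ), ENNReal.ofReal (1 - Real.exp (-(l * r))) ∂Λ).toReal + c :=
    (continuous_iff_continuousAt.2 fun l =>
      (ENNReal.tendsto_toReal (lintegral_one_sub_exp_ne_top hΛ l)).comp
        ((continuous_lintegral_one_sub_exp hΛ).tendsto l)).add continuous_const
  refine hcont.continuousOn.congr fun l hl => ?_
  simp [laplaceExpF, (Set.mem_Ioi.1 hl).ne']

lemma tendsto_lintegral_one_sub_exp_div_atTop :
    Tendsto (fun K : ℝ =>
      ∫⁻ r in Set.Ioi (0 : ℝ), ENNReal.ofReal ((1 - Real.exp (-(K * r))) / K) ∂Λ) atTop (𝓝 0) := by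
  have hpt : ∀ r : ℝ, Tendsto (fun K : ℝ => ENNReal.ofReal ((1 - Real.exp (-(K * r))) / K))
      atTop (𝓝 0) := by
    intro r
    have hinv : Tendsto (fun K : ℝ => ENNReal.ofReal K⁻¹) atTop (𝓝 0) := by
      have := (ENNReal.continuous_ofReal.tendsto 0).comp tendsto_inv_atTop_zero
      rwa [ENNReal.ofReal_zero] at this
    refine tendsto_of_tendsto_of_tendsto_of_le_of_le' tendsto_const_nhds hinv
      (Eventually.of_forall fun _ => zero_le) ?_
    filter_upwards [eventually_gt_atTop 0] with K hK
    refine ENNReal.ofReal_le_ofReal ?_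
    rw [div_eq_mul_inv]
    exact mul_le_of_le_one_left (by positivity) (by linarith [Real.exp_pos (-(K * r))])
  have hbound : ∀ᶠ K : ℝ in atTop, ∀ᵐ r ∂Λ.restrict (Set.Ioi 0),
      ENNReal.ofReal ((1 - Real.exp (-(K * r))) / K) ≤ ENNReal.ofReal (min 1 r) := by
    filter_upwards [eventually_ge_atTop 1] with K hK
    refine (ae_restrict_iff' measurableSet_Ioi).2 (Eventually.of_forall fun r hr => ?_)
    refine ENNReal.ofReal_le_ofReal ((div_le_iff₀ (by positivity)).2 ?_)
    simpa [max_eq_right hK, mul_comm] using one_sub_exp_neg_mul_le_max_mul_min K (le_of_lt hr)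
  simpa using tendsto_lintegral_filter_of_dominated_convergence
    (fun r => ENNReal.ofReal (min 1 r)) (Eventually.of_forall fun K => by fun_prop) hbound hΛ
    (Eventually.of_forall hpt)

lemma tendsto_laplaceExpF_div_atTop :
    Tendsto (fun K => laplaceExpF Λ c K / K) atTop (𝓝 0) := by
  have heq : ∀ᶠ K : ℝ in atTop,
      (∫⁻ r in Set.Ioi (0 : ℝ), ENNReal.ofReal ((1 - Real.exp (-(K * r))) / K) ∂Λ).toReal +
        c * K⁻¹ = laplaceExpF Λ c K / K := by
    filter_upwards [eventually_gt_atTop 0] with K hK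
    simp_rw [div_eq_mul_inv _ K, ENNReal.ofReal_mul' (inv_nonneg.2 hK.le)]
    rw [lintegral_mul_const _ (by fun_prop), ENNReal.toReal_mul,
      ENNReal.toReal_ofReal (inv_nonneg.2 hK.le), laplaceExpF, if_neg hK.ne']
    ring
  have hlim := ((ENNReal.tendsto_toReal ENNReal.zero_ne_top).comp
    (tendsto_lintegral_one_sub_exp_div_atTop hΛ)).add
    (tendsto_inv_atTop_zero.const_mul c)
  rw [ENNReal.toReal_zero, mul_zero, add_zero] at hlim
  exact hlim.congr' heq

lemma laplaceExpF_lt_self {η : ℝ} (hη : IsGreatest {l : ℝ | 0 ≤ l ∧ laplaceExpF Λ c l = l} η)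
    {y : ℝ} (hy : η < y) : laplaceExpF Λ c y < y := by
  obtain ⟨K, hyK, hK⟩ : ∃ K, y ≤ K ∧ laplaceExpF Λ c K < K := by
    obtain ⟨K, hK, hyK⟩ := (((tendsto_laplaceExpF_div_atTop hΛ).eventually
      (gt_mem_nhds one_pos)).and (eventually_ge_atTop (max y 1))).exists
    exact ⟨K, le_of_max_le_left hyK,
      (div_lt_one (one_pos.trans_le (le_of_max_le_right hyK))).1 hK⟩
  by_contra! hle
  have hy0 : 0 < y := hη.1.1.trans_lt hy
  obtain ⟨u, hu, hfix⟩ : ∃ u ∈ Set.Icc y K, u - laplaceExpF Λ c u = 0 :=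
    intermediate_value_Icc hyK ((continuousOn_id.sub (continuousOn_laplaceExpF hΛ)).mono
      fun u hu => hy0.trans_le hu.1) ⟨by simp; linarith, by simp; linarith⟩
  linarith [hu.1, hη.2 ⟨hy0.le.trans hu.1, by linarith⟩]

end LaplaceExponent

section Dyadic

noncomputable def dyadicAbove (k : ℕ) (z : ℝ) : ℝ := (⌊z * 2 ^ k⌋ + 1) / 2 ^ k

noncomputable def dyadicBelow (k : ℕ) (z : ℝ) : ℝ := max ((⌈z * 2 ^ k⌉ - 1) / 2 ^ k) 0

lemma lt_dyadicAbove (k : ℕ) (z : ℝ) : z < dyadicAbove k z :=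
  (lt_div_iff₀ (by positivity)).2 (Int.lt_floor_add_one _)

lemma dyadicAbove_le (k : ℕ) (z : ℝ) : dyadicAbove k z ≤ z + (2 ^ k)⁻¹ := by
  rw [dyadicAbove, div_le_iff₀ (by positivity), add_mul, inv_mul_cancel₀ (by positivity)]
  gcongr
  exact Int.floor_le _

lemma dyadicBelow_nonneg (k : ℕ) (z : ℝ) : 0 ≤ dyadicBelow k z := le_max_right _ _

lemma dyadicBelow_le (k : ℕ) {z : ℝ} (hz : 0 ≤ z) : dyadicBelow k z ≤ z := by
  refine max_le ((div_le_iff₀ (by positivity)).2 ?_) hz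
  linarith [Int.ceil_lt_add_one (z * 2 ^ k)]

lemma sub_le_dyadicBelow (k : ℕ) (z : ℝ) : z - (2 ^ k)⁻¹ ≤ dyadicBelow k z := by
  refine le_max_of_le_left ((le_div_iff₀ (by positivity)).2 ?_)
  rw [sub_mul, inv_mul_cancel₀ (by positivity)]
  linarith [Int.le_ceil (z * 2 ^ k)]

lemma antitone_dyadicAbove (z : ℝ) : Antitone fun k => dyadicAbove k z := by
  refine antitone_nat_of_succ_le fun k => ?_
  have h : ⌊z * 2 ^ (k + 1)⌋ ≤ 2 * ⌊z * 2 ^ k⌋ + 1 := by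
    have : ⌊z * 2 ^ (k + 1)⌋ < 2 * ⌊z * 2 ^ k⌋ + 2 := Int.floor_lt.2 (by
      push_cast; rw [pow_succ]; linarith [Int.lt_floor_add_one (z * 2 ^ k)])
    omega
  have h' : (⌊z * 2 ^ (k + 1)⌋ : ℝ) ≤ 2 * ⌊z * 2 ^ k⌋ + 1 := by exact_mod_cast h
  rw [pow_succ] at h'
  rw [dyadicAbove, dyadicAbove, div_le_div_iff₀ (by positivity) (by positivity), pow_succ]
  nlinarith [pow_pos (two_pos (α := ℝ)) k]

lemma monotone_dyadicBelow (z : ℝ) : Monotone fun k => dyadicBelow k z := by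
  refine monotone_nat_of_le_succ fun k => max_le_max ?_ le_rfl
  have h : 2 * ⌈z * 2 ^ k⌉ - 1 ≤ ⌈z * 2 ^ (k + 1)⌉ := by
    have : 2 * ⌈z * 2 ^ k⌉ - 2 < ⌈z * 2 ^ (k + 1)⌉ := Int.lt_ceil.2 (by
      push_cast; rw [pow_succ]; linarith [Int.ceil_lt_add_one (z * 2 ^ k)])
    omega
  have h' : 2 * (⌈z * 2 ^ k⌉ : ℝ) - 1 ≤ ⌈z * 2 ^ (k + 1)⌉ := by exact_mod_cast h
  rw [pow_succ] at h'
  rw [div_le_div_iff₀ (by positivity) (by positivity), pow_succ]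
  nlinarith [pow_pos (two_pos (α := ℝ)) k]

lemma tendsto_inv_two_pow : Tendsto (fun k : ℕ => ((2 : ℝ) ^ k)⁻¹) atTop (𝓝 0) :=
  tendsto_inv_atTop_zero.comp (tendsto_pow_atTop_atTop_of_one_lt one_lt_two)

lemma tendsto_dyadicAbove (z : ℝ) : Tendsto (fun k => dyadicAbove k z) atTop (𝓝 z) := by
  refine tendsto_of_tendsto_of_tendsto_of_le_of_le tendsto_const_nhds ?_
    (fun k => (lt_dyadicAbove k z).le) (fun k => dyadicAbove_le k z)
  simpa using tendsto_inv_two_pow.const_add z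

lemma tendsto_dyadicBelow {z : ℝ} (hz : 0 ≤ z) :
    Tendsto (fun k => dyadicBelow k z) atTop (𝓝 z) := by
  refine tendsto_of_tendsto_of_tendsto_of_le_of_le ?_ tendsto_const_nhds
    (fun k => sub_le_dyadicBelow k z) (fun k => dyadicBelow_le k hz)
  simpa using tendsto_inv_two_pow.const_sub z

lemma measurable_eval_comp_countable {ι : Type*} [Countable ι] [MeasurableSpace ι]
    [MeasurableSingletonClass ι] {φ : ℝ → ι} (hφ : Measurable φ) (g : ι → ℝ) :
    Measurable fun p : (ℝ → ℝ) × ℝ => p.1 (g (φ p.2)) :=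
  (measurable_from_prod_countable_left (f := fun q : (ℝ → ℝ) × ι => q.1 (g q.2))
    fun y => measurable_pi_apply (g y)).comp (measurable_fst.prodMk (hφ.comp measurable_snd))

end Dyadic

section PathLimits

/-- For monotone `f` and `z ≥ 0` these are the one-sided limits `f (z+)` and `f (z-)`; going
through the dyadic grid, unlike `Function.rightLim`, makes them jointly measurable in `(f, z)`. -/
noncomputable def rightLimDyadic (f : ℝ → ℝ) (z : ℝ) : ℝ := ⨅ k, f (dyadicAbove k z)

noncomputable def leftLimDyadic (f : ℝ → ℝ) (z : ℝ) : ℝ := ⨆ k, f (dyadicBelow k z)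

lemma measurable_rightLimDyadic :
    Measurable fun p : (ℝ → ℝ) × ℝ => rightLimDyadic p.1 p.2 :=
  Measurable.iInf fun k => measurable_eval_comp_countable
    (Int.measurable_floor.comp (measurable_id.mul_const _)) fun m : ℤ => (m + 1) / 2 ^ k

lemma measurable_leftLimDyadic :
    Measurable fun p : (ℝ → ℝ) × ℝ => leftLimDyadic p.1 p.2 :=
  Measurable.iSup fun k => measurable_eval_comp_countable
    (Int.measurable_ceil.comp (measurable_id.mul_const _)) fun m : ℤ => max ((m - 1) / 2 ^ k) 0

variable {f : ℝ → ℝ} (hf : Monotone f)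
include hf

lemma Monotone.le_rightLimDyadic (z : ℝ) : f z ≤ rightLimDyadic f z :=
  le_ciInf fun k => hf (lt_dyadicAbove k z).le

lemma Monotone.leftLimDyadic_le {z : ℝ} (hz : 0 ≤ z) : leftLimDyadic f z ≤ f z :=
  ciSup_le fun k => hf (dyadicBelow_le k hz)

lemma Monotone.le_leftLimDyadic {z : ℝ} (hz : 0 ≤ z) (k : ℕ) :
    f (dyadicBelow k z) ≤ leftLimDyadic f z :=
  le_ciSup ⟨f z, Set.forall_mem_range.2 fun k => hf (dyadicBelow_le k hz)⟩ k

lemma Monotone.tendsto_rightLimDyadic (z : ℝ) :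
    Tendsto (fun k => f (dyadicAbove k z)) atTop (𝓝 (rightLimDyadic f z)) :=
  tendsto_atTop_ciInf (hf.comp_antitone (antitone_dyadicAbove z))
    ⟨f z, Set.forall_mem_range.2 fun k => hf (lt_dyadicAbove k z).le⟩

lemma Monotone.tendsto_leftLimDyadic {z : ℝ} (hz : 0 ≤ z) :
    Tendsto (fun k => f (dyadicBelow k z)) atTop (𝓝 (leftLimDyadic f z)) :=
  tendsto_atTop_ciSup (hf.comp (monotone_dyadicBelow z))
    ⟨f z, Set.forall_mem_range.2 fun k => hf (dyadicBelow_le k hz)⟩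

end PathLimits

section Laplace

variable {Ω : Type*} [MeasurableSpace Ω] {μ : Measure Ω} [IsProbabilityMeasure μ]

lemma lintegral_expNeg_eq_ofReal_integral {f : Ω → ℝ} (hf : Measurable f) (hf0 : ∀ ω, 0 ≤ f ω) :
    ∫⁻ ω, expNeg (f ω) ∂μ = ENNReal.ofReal (∫ ω, Real.exp (-f ω) ∂μ) := by
  refine (ofReal_integral_eq_lintegral_ofReal ?_ (Eventually.of_forall fun ω => ?_)).symm
  · refine Integrable.of_bound (by fun_prop) 1 (Eventually.of_forall fun ω => ?_)
    rw [Real.norm_eq_abs, abs_of_pos (Real.exp_pos _)]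
    exact Real.exp_le_one_iff.2 (by linarith [hf0 ω])
  · exact (Real.exp_pos _).le

lemma lintegral_expNeg_of_tendsto {T : ℝ → Ω → ℝ} (hT : ∀ t, Measurable (T t))
    (hT0 : ∀ t, 0 ≤ t → ∀ ω, 0 ≤ T t ω) {β g : ℝ} (hβ : 0 ≤ β)
    (hlap : ∀ t, 0 ≤ t → ∫⁻ ω, expNeg (β * T t ω) ∂μ = expNeg (t * g))
    {τ : ℕ → ℝ} {z : ℝ} (hτ0 : ∀ k, 0 ≤ τ k) (hτ : Tendsto τ atTop (𝓝 z))
    {Y : Ω → ℝ} (hY : ∀ ω, Tendsto (fun k => T (τ k) ω) atTop (𝓝 (Y ω))) :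
    ∫⁻ ω, expNeg (β * Y ω) ∂μ = expNeg (z * g) := by
  refine tendsto_nhds_unique ?_ (((continuous_expNeg.comp (continuous_mul_const g)).tendsto z).comp
    hτ |>.congr fun k => (hlap (τ k) (hτ0 k)).symm)
  refine tendsto_lintegral_filter_of_dominated_convergence 1
    (Eventually.of_forall fun k => by fun_prop)
    (Eventually.of_forall fun k => Eventually.of_forall fun ω =>
      expNeg_le_one (mul_nonneg hβ (hT0 _ (hτ0 k) ω))) (by simp) (Eventually.of_forall fun ω => ?_)
  exact ((continuous_expNeg.comp (continuous_const_mul β)).tendsto _).comp (hY ω)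

lemma lintegral_comp_eq_lintegral_lintegral_of_indepFun {α β : Type*} [MeasurableSpace α]
    [MeasurableSpace β] {X : Ω → α} {Y : Ω → β} (hX : Measurable X) (hY : Measurable Y)
    (hXY : IndepFun X Y μ) {k : α × β → ℝ≥0∞} (hk : Measurable k) :
    ∫⁻ ω, k (X ω, Y ω) ∂μ = ∫⁻ a, ∫⁻ ω, k (a, Y ω) ∂μ ∂(μ.map X) := by
  have : IsProbabilityMeasure (μ.map X) := Measure.isProbabilityMeasure_map hX.aemeasurable
  have : IsProbabilityMeasure (μ.map Y) := Measure.isProbabilityMeasure_map hY.aemeasurable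
  calc ∫⁻ ω, k (X ω, Y ω) ∂μ = ∫⁻ p, k p ∂(μ.map fun ω => (X ω, Y ω)) :=
        (lintegral_map hk (hX.prodMk hY)).symm
    _ = ∫⁻ p, k p ∂((μ.map X).prod (μ.map Y)) := by
        rw [(indepFun_iff_map_prod_eq_prod_map_map hX.aemeasurable hY.aemeasurable).1 hXY]
    _ = ∫⁻ a, ∫⁻ b, k (a, b) ∂(μ.map Y) ∂(μ.map X) := lintegral_prod _ hk.aemeasurable
    _ = ∫⁻ a, ∫⁻ ω, k (a, Y ω) ∂μ ∂(μ.map X) :=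
        lintegral_congr fun a => lintegral_map (hk.comp measurable_prodMk_left) hY

end Laplace

section FactorsThrough

variable {Ω α β : Type*} [MeasurableSpace Ω] [MeasurableSpace α] [MeasurableSpace β]
  {μ : Measure Ω}

def AEFactorsThrough (μ : Measure Ω) (Y : Ω → β) (X : Ω → α) : Prop :=
  ∃ g : α → β, Measurable g ∧ Y =ᵐ[μ] g ∘ X

lemma AEFactorsThrough.trans {γ : Type*} [MeasurableSpace γ] {Y : Ω → β} {X : Ω → α}
    {W : Ω → γ} (hY : AEFactorsThrough μ Y X) (hX : AEFactorsThrough μ X W) :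
    AEFactorsThrough μ Y W := by
  obtain ⟨g, hg, hYg⟩ := hY
  obtain ⟨r, hr, hXr⟩ := hX
  exact ⟨g ∘ r, hg.comp hr, hYg.trans (hXr.fun_comp g)⟩

lemma AEFactorsThrough.comp {γ : Type*} [MeasurableSpace γ] {Y : Ω → β} {X : Ω → α}
    (hY : AEFactorsThrough μ Y X) {φ : β → γ} (hφ : Measurable φ) :
    AEFactorsThrough μ (φ ∘ Y) X := by
  obtain ⟨g, hg, hYg⟩ := hY
  exact ⟨φ ∘ g, hφ.comp hg, hYg.fun_comp φ⟩

lemma AEFactorsThrough.add {Y₁ Y₂ : Ω → ℝ} {X : Ω → α} (h₁ : AEFactorsThrough μ Y₁ X)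
    (h₂ : AEFactorsThrough μ Y₂ X) : AEFactorsThrough μ (Y₁ + Y₂) X := by
  obtain ⟨g₁, hg₁, hY₁⟩ := h₁
  obtain ⟨g₂, hg₂, hY₂⟩ := h₂
  exact ⟨g₁ + g₂, hg₁.add hg₂, hY₁.add hY₂⟩

end FactorsThrough

section Freezing

variable {Ω α : Type*} [MeasurableSpace Ω] [MeasurableSpace α] {μ : Measure Ω}
  [IsProbabilityMeasure μ]

/-- As `P` is independent of `X`, the `P`-integral may be taken with the functions `H` and `Y`
of `X` frozen; `Y` then sits at a constant time `z`, where the Laplace transform of `L (P ·) z`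
is known. -/
lemma lintegral_mul_expNeg_of_indepFun {X : Ω → α} {P : Ω → ℝ → ℝ} (hX : Measurable X)
    (hP : Measurable P) (hXP : IndepFun X P μ) {L : (ℝ → ℝ) → ℝ → ℝ}
    (hL : Measurable fun p : (ℝ → ℝ) × ℝ => L p.1 p.2) {β g : ℝ}
    (hLlap : ∀ z, 0 ≤ z → ∫⁻ ω, expNeg (β * L (P ω) z) ∂μ = expNeg (z * g))
    {Y : Ω → ℝ} (hY : AEFactorsThrough μ Y X) (hY0 : ∀ ω, 0 ≤ Y ω)
    {H : Ω → ℝ≥0∞} (hH : AEFactorsThrough μ H X) :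
    ∫⁻ ω, H ω * expNeg (β * L (P ω) (Y ω)) ∂μ = ∫⁻ ω, H ω * expNeg (Y ω * g) ∂μ := by
  obtain ⟨y, hy, hYy⟩ := hY
  obtain ⟨h, hh, hHh⟩ := hH
  set y' : α → ℝ := fun a => max (y a) 0
  have hy' : Measurable y' := hy.max measurable_const
  have hYy' : Y =ᵐ[μ] y' ∘ X := hYy.mono fun ω hω => by
    rw [Function.comp_apply] at hω
    show Y ω = max (y (X ω)) 0
    rw [← hω, max_eq_left (hY0 ω)]
  have hk : Measurable fun q : α × (ℝ → ℝ) => h q.1 * expNeg (β * L q.2 (y' q.1)) :=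
    (hh.comp measurable_fst).mul (measurable_expNeg.comp
      ((hL.comp (measurable_snd.prodMk (hy'.comp measurable_fst))).const_mul β))
  calc ∫⁻ ω, H ω * expNeg (β * L (P ω) (Y ω)) ∂μ
      = ∫⁻ ω, h (X ω) * expNeg (β * L (P ω) (y' (X ω))) ∂μ :=
        lintegral_congr_ae (by filter_upwards [hHh, hYy'] with ω h₁ h₂; simp only [h₁, h₂]; rfl)
    _ = ∫⁻ a, ∫⁻ ω, h a * expNeg (β * L (P ω) (y' a)) ∂μ ∂(μ.map X) :=
        lintegral_comp_eq_lintegral_lintegral_of_indepFun hX hP hXP hk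
    _ = ∫⁻ a, h a * expNeg (y' a * g) ∂(μ.map X) := lintegral_congr fun a => by
        have hm : Measurable fun ω => expNeg (β * L (P ω) (y' a)) :=
          measurable_expNeg.comp ((hL.comp (hP.prodMk measurable_const)).const_mul β)
        rw [lintegral_const_mul _ hm, hLlap _ (le_max_right _ _)]
    _ = ∫⁻ ω, h (X ω) * expNeg (y' (X ω) * g) ∂μ :=
        lintegral_map (hh.mul (measurable_expNeg.comp (hy'.mul_const g))) hX
    _ = ∫⁻ ω, H ω * expNeg (Y ω * g) ∂μ :=
        lintegral_congr_ae (by filter_upwards [hHh, hYy'] with ω h₁ h₂; simp only [h₁, h₂]; rfl)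

end Freezing

section Sequences

lemma iInf_expNeg_mul_sum_eq_zero {a : ℕ → ℝ} (ha : ∀ n, 0 ≤ a n) (h : ¬Summable a) {θ : ℝ}
    (hθ : 0 < θ) : ⨅ n, expNeg (θ * ∑ i ∈ Finset.range n, a i) = 0 :=
  le_antisymm (ge_of_tendsto' (tendsto_expNeg_atTop.comp
    (((not_summable_iff_tendsto_nat_atTop_of_nonneg ha).1 h).const_mul_atTop hθ))
      fun n => iInf_le _ n) zero_le

lemma measurableSet_summable_of_nonneg {Ω : Type*} [MeasurableSpace Ω] {f : ℕ → Ω → ℝ}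
    (hf : ∀ n, Measurable (f n)) (hf0 : ∀ n ω, 0 ≤ f n ω) :
    MeasurableSet {ω | Summable fun n => f n ω} := by
  have h : {ω | Summable fun n => f n ω} =
      {ω | ∃ c, Tendsto (fun n => ∑ i ∈ Finset.range n, f i ω) atTop (𝓝 c)} := by
    ext ω
    exact ⟨fun hs => ⟨_, (hasSum_iff_tendsto_nat_of_nonneg (hf0 · ω) _).1 hs.hasSum⟩,
      fun ⟨c, hc⟩ => ((hasSum_iff_tendsto_nat_of_nonneg (hf0 · ω) c).2 hc).summable⟩
  rw [h]
  exact measurableSet_exists_tendsto fun n => Finset.measurable_sum _ fun i _ => hf i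

lemma ae_eq_of_le_of_lintegral_expNeg_eq {Ω : Type*} [MeasurableSpace Ω] {μ : Measure Ω}
    [IsFiniteMeasure μ] {X Y : Ω → ℝ} (hX : Measurable X) (hX0 : ∀ ω, 0 ≤ X ω)
    (hXY : ∀ ω, X ω ≤ Y ω) (h : ∫⁻ ω, expNeg (X ω) ∂μ = ∫⁻ ω, expNeg (Y ω) ∂μ) :
    X =ᵐ[μ] Y := by
  have hfin : ∫⁻ ω, expNeg (Y ω) ∂μ ≠ ∞ :=
    ne_top_of_le_ne_top (measure_ne_top μ Set.univ) ((lintegral_mono fun ω =>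
      expNeg_le_one ((hX0 ω).trans (hXY ω))).trans_eq (by simp))
  have hexp := ae_eq_of_ae_le_of_lintegral_le
    (Eventually.of_forall fun ω => expNeg_strictAnti.antitone (hXY ω)) hfin
    (measurable_expNeg.comp hX).aemeasurable h.le
  exact hexp.mono fun ω hω => (expNeg_strictAnti.injective hω).symm

end Sequences

structure IsJirinaProcess {Ω : Type*} [MeasurableSpace Ω] (μ : Measure Ω) (G : ℝ → ℝ)
    (S : ℕ → ℝ → Ω → ℝ) (x : ℝ) (Z : ℕ → Ω → ℝ) : Prop where
  measurable_subordinator : ∀ n, Measurable fun ω t => S n t ω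
  subordinator_nonneg : ∀ n t ω, 0 ≤ t → 0 ≤ S n t ω
  monotone_subordinator : ∀ n ω, Monotone fun t => S n t ω
  iIndepFun_subordinator : iIndepFun (fun n ω t => S n t ω) μ
  integral_exp_subordinator : ∀ n, ∀ t, 0 ≤ t → ∀ l, 0 ≤ l →
    ∫ ω, Real.exp (-(l * S n t ω)) ∂μ = Real.exp (-(t * G l))
  start_nonneg : 0 ≤ x
  measurable : ∀ n, Measurable (Z n)
  zero_eq : ∀ ω, Z 0 ω = x
  succ_eq : ∀ n ω, Z (n + 1) ω = S (n + 1) (Z n ω) ω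

def initPaths {Ω : Type*} (S : ℕ → ℝ → Ω → ℝ) (n : ℕ) (ω : Ω) : Fin (n + 1) → ℝ → ℝ :=
  fun i t => S i t ω

namespace IsJirinaProcess

variable {Ω : Type*} [MeasurableSpace Ω] {μ : Measure Ω} {G : ℝ → ℝ}
  {S : ℕ → ℝ → Ω → ℝ} {x : ℝ} {Z : ℕ → Ω → ℝ} (hJ : IsJirinaProcess μ G S x Z)
include hJ

lemma nonneg (n : ℕ) (ω : Ω) : 0 ≤ Z n ω := by
  induction n with
  | zero => rw [hJ.zero_eq]; exact hJ.start_nonneg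
  | succ n ih => rw [hJ.succ_eq]; exact hJ.subordinator_nonneg _ _ ω ih

lemma measurable_initPaths (n : ℕ) : Measurable (initPaths S n) :=
  measurable_pi_lambda _ fun i => hJ.measurable_subordinator i

lemma measurable_subordinator_apply (n : ℕ) (t : ℝ) : Measurable (S n t) :=
  (measurable_pi_apply t).comp (hJ.measurable_subordinator n)

lemma indepFun_initPaths (n : ℕ) :
    IndepFun (initPaths S n) (fun ω t => S (n + 1) t ω) μ := by
  have h := hJ.iIndepFun_subordinator.indepFun_finset (Finset.range (n + 1)) {n + 1}
    (by simp) hJ.measurable_subordinator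
  exact h.comp (φ := fun v (i : Fin (n + 1)) => v ⟨i, Finset.mem_range.2 i.isLt⟩)
    (ψ := fun v => v ⟨n + 1, Finset.mem_singleton_self _⟩)
    (measurable_pi_lambda _ fun i => measurable_pi_apply _)
    (measurable_pi_apply (⟨n + 1, Finset.mem_singleton_self _⟩ : ({n + 1} : Finset ℕ)))

variable [IsProbabilityMeasure μ]

lemma lintegral_expNeg_subordinator (n : ℕ) {t : ℝ} (ht : 0 ≤ t) {l : ℝ} (hl : 0 ≤ l) :
    ∫⁻ ω, expNeg (l * S n t ω) ∂μ = expNeg (t * G l) := by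
  rw [lintegral_expNeg_eq_ofReal_integral ((hJ.measurable_subordinator_apply n t).const_mul l)
    fun ω => mul_nonneg hl (hJ.subordinator_nonneg n t ω ht),
    hJ.integral_exp_subordinator n t ht l hl]
  rfl

lemma lintegral_expNeg_rightLimDyadic (n : ℕ) {z : ℝ} (hz : 0 ≤ z) {β : ℝ} (hβ : 0 ≤ β) :
    ∫⁻ ω, expNeg (β * rightLimDyadic (fun t => S n t ω) z) ∂μ = expNeg (z * G β) :=
  lintegral_expNeg_of_tendsto
    (hJ.measurable_subordinator_apply n)
    (fun t ht ω => hJ.subordinator_nonneg n t ω ht) hβ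
    (fun _ ht => hJ.lintegral_expNeg_subordinator n ht hβ)
    (fun k => hz.trans (lt_dyadicAbove k z).le) (tendsto_dyadicAbove z)
    fun ω => (hJ.monotone_subordinator n ω).tendsto_rightLimDyadic z

lemma lintegral_expNeg_leftLimDyadic (n : ℕ) {z : ℝ} (hz : 0 ≤ z) {β : ℝ} (hβ : 0 ≤ β) :
    ∫⁻ ω, expNeg (β * leftLimDyadic (fun t => S n t ω) z) ∂μ = expNeg (z * G β) :=
  lintegral_expNeg_of_tendsto
    (hJ.measurable_subordinator_apply n)
    (fun t ht ω => hJ.subordinator_nonneg n t ω ht) hβ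
    (fun _ ht => hJ.lintegral_expNeg_subordinator n ht hβ)
    (fun k => dyadicBelow_nonneg k z) (tendsto_dyadicBelow hz)
    fun ω => (hJ.monotone_subordinator n ω).tendsto_leftLimDyadic hz

lemma ae_eq_rightLimDyadic {n : ℕ} (hZn : AEFactorsThrough μ (Z n) (initPaths S n)) :
    Z (n + 1) =ᵐ[μ] fun ω => rightLimDyadic (fun t => S (n + 1) t ω) (Z n ω) := by
  have hmono := hJ.monotone_subordinator (n + 1)
  have hLZ : ∀ ω, leftLimDyadic (fun t => S (n + 1) t ω) (Z n ω) ≤ Z (n + 1) ω := fun ω => by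
    rw [hJ.succ_eq]; exact (hmono ω).leftLimDyadic_le (hJ.nonneg n ω)
  have hZR : ∀ ω, Z (n + 1) ω ≤ rightLimDyadic (fun t => S (n + 1) t ω) (Z n ω) := fun ω => by
    rw [hJ.succ_eq]; exact (hmono ω).le_rightLimDyadic _
  have hfreeze : ∀ {L : (ℝ → ℝ) → ℝ → ℝ}, Measurable (fun p : (ℝ → ℝ) × ℝ => L p.1 p.2) →
      (∀ z, 0 ≤ z → ∫⁻ ω, expNeg (1 * L (fun t => S (n + 1) t ω) z) ∂μ = expNeg (z * G 1)) →
      ∫⁻ ω, expNeg (L (fun t => S (n + 1) t ω) (Z n ω)) ∂μ =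
        ∫⁻ ω, expNeg (Z n ω * G 1) ∂μ := fun hL hLlap => by
    simpa using lintegral_mul_expNeg_of_indepFun (hJ.measurable_initPaths n)
      (hJ.measurable_subordinator (n + 1)) (hJ.indepFun_initPaths n) hL hLlap hZn
      (hJ.nonneg n) ⟨fun _ => 1, measurable_const, .rfl⟩
  have hLR := ae_eq_of_le_of_lintegral_expNeg_eq
    (measurable_leftLimDyadic.comp ((hJ.measurable_subordinator _).prodMk (hJ.measurable n)))
    (fun ω => (hJ.subordinator_nonneg _ _ ω (dyadicBelow_nonneg 0 _)).trans
      ((hmono ω).le_leftLimDyadic (hJ.nonneg n ω) 0))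
    (fun ω => (hLZ ω).trans (hZR ω))
    ((hfreeze measurable_leftLimDyadic fun _ hz =>
      hJ.lintegral_expNeg_leftLimDyadic _ hz zero_le_one).trans
      (hfreeze measurable_rightLimDyadic fun _ hz =>
        hJ.lintegral_expNeg_rightLimDyadic _ hz zero_le_one).symm)
  filter_upwards [hLR] with ω hω
  exact le_antisymm (hZR ω) (hω ▸ hLZ ω)

lemma aeFactorsThrough_initPaths (n : ℕ) : AEFactorsThrough μ (Z n) (initPaths S n) := by
  induction n with
  | zero => exact ⟨fun _ => x, measurable_const, Eventually.of_forall hJ.zero_eq⟩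
  | succ n ih =>
    obtain ⟨y, hy, hZy⟩ := ih
    have hm : Measurable fun w : Fin (n + 2) → ℝ → ℝ => (w (Fin.last (n + 1)), y (Fin.init w)) :=
      (measurable_pi_apply _).prodMk
        (hy.comp (measurable_pi_lambda _ fun i => measurable_pi_apply _))
    refine ⟨fun w => rightLimDyadic (w (Fin.last (n + 1))) (y (Fin.init w)),
      measurable_rightLimDyadic.comp hm, ?_⟩
    filter_upwards [hJ.ae_eq_rightLimDyadic ⟨y, hy, hZy⟩, hZy] with ω h₁ h₂
    rw [h₁, h₂]
    rfl

lemma lintegral_mul_expNeg_succ {n : ℕ} {H : Ω → ℝ≥0∞} (hH : AEFactorsThrough μ H (initPaths S n))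
    {β : ℝ} (hβ : 0 ≤ β) :
    ∫⁻ ω, H ω * expNeg (β * Z (n + 1) ω) ∂μ = ∫⁻ ω, H ω * expNeg (G β * Z n ω) ∂μ := by
  calc ∫⁻ ω, H ω * expNeg (β * Z (n + 1) ω) ∂μ
      = ∫⁻ ω, H ω * expNeg (β * rightLimDyadic (fun t => S (n + 1) t ω) (Z n ω)) ∂μ :=
        lintegral_congr_ae ((hJ.ae_eq_rightLimDyadic (hJ.aeFactorsThrough_initPaths n)).mono
          fun ω hω => by simp only [hω])
    _ = ∫⁻ ω, H ω * expNeg (Z n ω * G β) ∂μ :=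
        lintegral_mul_expNeg_of_indepFun (hJ.measurable_initPaths n)
          (hJ.measurable_subordinator (n + 1)) (hJ.indepFun_initPaths n)
          measurable_rightLimDyadic (fun _ hz => hJ.lintegral_expNeg_rightLimDyadic _ hz hβ)
          (hJ.aeFactorsThrough_initPaths n) (hJ.nonneg n) hH
    _ = ∫⁻ ω, H ω * expNeg (G β * Z n ω) ∂μ := by simp_rw [mul_comm (Z n _)]

lemma aeFactorsThrough_sum (n : ℕ) :
    AEFactorsThrough μ (fun ω => ∑ i ∈ Finset.range (n + 1), Z i ω) (initPaths S n) := by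
  induction n with
  | zero => simpa using hJ.aeFactorsThrough_initPaths 0
  | succ n ih =>
    simp_rw [Finset.sum_range_succ _ (n + 1)]
    exact (ih.trans ⟨Fin.init, measurable_pi_lambda _ fun i => measurable_pi_apply _, .rfl⟩).add
      (hJ.aeFactorsThrough_initPaths (n + 1))

lemma lintegral_expNeg_sum_add (hG : ∀ l, 0 ≤ G l) {θ : ℝ} (hθ : 0 ≤ θ) (n : ℕ) {β : ℝ}
    (hβ : 0 ≤ β) :
    ∫⁻ ω, expNeg (θ * ∑ i ∈ Finset.range n, Z i ω + β * Z n ω) ∂μ =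
      expNeg ((fun y => θ + G y)^[n] β * x) := by
  induction n generalizing β with
  | zero => simp [hJ.zero_eq]
  | succ n ih =>
    have hH : AEFactorsThrough μ (fun ω => expNeg (θ * ∑ i ∈ Finset.range (n + 1), Z i ω))
        (initPaths S n) :=
      (hJ.aeFactorsThrough_sum n).comp (φ := fun s => expNeg (θ * s)) (by fun_prop)
    calc ∫⁻ ω, expNeg (θ * ∑ i ∈ Finset.range (n + 1), Z i ω + β * Z (n + 1) ω) ∂μ
        = ∫⁻ ω, expNeg (θ * ∑ i ∈ Finset.range (n + 1), Z i ω) * expNeg (β * Z (n + 1) ω) ∂μ := by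
          simp_rw [expNeg_add]
      _ = ∫⁻ ω, expNeg (θ * ∑ i ∈ Finset.range (n + 1), Z i ω) * expNeg (G β * Z n ω) ∂μ :=
          hJ.lintegral_mul_expNeg_succ hH hβ
      _ = ∫⁻ ω, expNeg (θ * ∑ i ∈ Finset.range n, Z i ω + (θ + G β) * Z n ω) ∂μ := by
          refine lintegral_congr fun ω => ?_
          rw [← expNeg_add, Finset.sum_range_succ]
          ring_nf
      _ = expNeg ((fun y => θ + G y)^[n + 1] β * x) := ih (add_nonneg hθ (hG β))

lemma measure_tendsto_zero_le (hG : ∀ l, 0 ≤ G l) {η : ℝ} (hη0 : 0 ≤ η) (hfix : G η = η) :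
    μ {ω | Tendsto (fun n => Z n ω) atTop (𝓝 0)} ≤ expNeg (η * x) := by
  have hlap : ∀ n, ∫⁻ ω, expNeg (η * Z n ω) ∂μ = expNeg (η * x) := fun n => by
    simpa [Function.iterate_fixed hfix] using hJ.lintegral_expNeg_sum_add hG le_rfl n hη0
  have hmeas : MeasurableSet {ω | Tendsto (fun n => Z n ω) atTop (𝓝 0)} :=
    measurableSet_tendsto _ hJ.measurable
  calc μ {ω | Tendsto (fun n => Z n ω) atTop (𝓝 0)}
      = ∫⁻ ω, {ω | Tendsto (fun n => Z n ω) atTop (𝓝 0)}.indicator 1 ω ∂μ :=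
        (lintegral_indicator_one hmeas).symm
    _ ≤ ∫⁻ ω, liminf (fun n => expNeg (η * Z n ω)) atTop ∂μ := lintegral_mono fun ω => by
        by_cases hω : Tendsto (fun n => Z n ω) atTop (𝓝 0)
        · have h : Tendsto (fun n => expNeg (η * Z n ω)) atTop (𝓝 1) := by
            simpa [Function.comp_def] using
              ((continuous_expNeg.comp (continuous_const_mul η)).tendsto 0).comp hω
          rw [Set.indicator_of_mem (by exact hω), Pi.one_apply, h.liminf_eq]
        · rw [Set.indicator_of_notMem (by exact hω)]
          exact zero_le
    _ ≤ liminf (fun n => ∫⁻ ω, expNeg (η * Z n ω) ∂μ) atTop :=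
        lintegral_liminf_le fun n => measurable_expNeg.comp ((hJ.measurable n).const_mul η)
    _ = expNeg (η * x) := by simp_rw [hlap, liminf_const]

lemma expNeg_le_measure_summable (hG : ∀ l, 0 ≤ G l) (hGmono : MonotoneOn G (Set.Ici 0))
    {u : ℝ} (hu : G u < u) : expNeg (u * x) ≤ μ {ω | Summable fun n => Z n ω} := by
  set θ := u - G u
  have hθ : 0 < θ := sub_pos.2 hu
  have hu0 : 0 ≤ u := (hG u).trans hu.le
  have hmaps : Set.MapsTo (fun y => θ + G y) (Set.Icc 0 u) (Set.Icc 0 u) := fun y hy =>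
    ⟨add_nonneg hθ.le (hG y), by linarith [hGmono hy.1 (Set.mem_Ici.2 hu0) hy.2]⟩
  have hpartial : ∀ n, expNeg (u * x) ≤ ∫⁻ ω, expNeg (θ * ∑ i ∈ Finset.range n, Z i ω) ∂μ :=
    fun n => by
      have h := hJ.lintegral_expNeg_sum_add hG hθ.le n le_rfl
      simp only [zero_mul, add_zero] at h
      rw [h]
      exact expNeg_strictAnti.antitone (mul_le_mul_of_nonneg_right
        (hmaps.iterate n ⟨le_rfl, hu0⟩).2 hJ.start_nonneg)
  have hanti : Antitone fun n ω => expNeg (θ * ∑ i ∈ Finset.range n, Z i ω) :=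
    fun m n hmn ω => expNeg_strictAnti.antitone (mul_le_mul_of_nonneg_left
      (Finset.sum_le_sum_of_subset_of_nonneg (Finset.range_subset_range.2 hmn)
        fun i _ _ => hJ.nonneg i ω) hθ.le)
  calc expNeg (u * x) ≤ ⨅ n, ∫⁻ ω, expNeg (θ * ∑ i ∈ Finset.range n, Z i ω) ∂μ :=
        le_iInf hpartial
    _ = ∫⁻ ω, ⨅ n, expNeg (θ * ∑ i ∈ Finset.range n, Z i ω) ∂μ :=
        (lintegral_iInf (fun n => measurable_expNeg.comp ((Finset.measurable_sum _
          fun i _ => hJ.measurable i).const_mul θ)) hanti (by simp)).symm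
    _ ≤ ∫⁻ ω, {ω | Summable fun n => Z n ω}.indicator 1 ω ∂μ := lintegral_mono fun ω => by
        by_cases hω : Summable fun n => Z n ω
        · rw [Set.indicator_of_mem (by exact hω), Pi.one_apply]
          exact iInf_le_of_le 0 (by simp)
        · rw [iInf_expNeg_mul_sum_eq_zero (hJ.nonneg · ω) hω hθ]
          exact zero_le
    _ = μ {ω | Summable fun n => Z n ω} :=
        lintegral_indicator_one (measurableSet_summable_of_nonneg hJ.measurable hJ.nonneg)

lemma expNeg_le_measure_summable_of_forall_lt (hG : ∀ l, 0 ≤ G l)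
    (hGmono : MonotoneOn G (Set.Ici 0)) {η : ℝ} (hlt : ∀ u, η < u → G u < u) :
    expNeg (η * x) ≤ μ {ω | Summable fun n => Z n ω} :=
  le_of_tendsto (((continuous_expNeg.comp (continuous_mul_const x)).tendsto η).mono_left
    (nhdsWithin_le_nhds (s := Set.Ioi η))) (eventually_nhdsWithin_of_forall fun u hu =>
      hJ.expNeg_le_measure_summable hG hGmono (hlt u hu))

end IsJirinaProcess

theorem stmt_5_general {Ω : Type*} [MeasurableSpace Ω] (μ : Measure Ω) [IsProbabilityMeasure μ]
    (Λ : Measure ℝ) (c : ℝ) (hc : 0 ≤ c)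
    (hΛ : (∫⁻ r in Set.Ioi (0 : ℝ), ENNReal.ofReal (min 1 r) ∂Λ) ≠ ⊤)
    (η : ℝ) (hη : IsGreatest {l : ℝ | 0 ≤ l ∧ laplaceExpF Λ c l = l} η)
    (S : ℕ → ℝ → Ω → ℝ)
    (hSmeas : ∀ n, Measurable (fun ω => (fun t : ℝ => S n t ω)))
    (hSmono : ∀ n ω, Monotone (fun t => S n t ω))
    (hSnonneg : ∀ n t ω, 0 ≤ t → 0 ≤ S n t ω)
    (hindep : iIndepFun
      (fun n ω => (fun t : ℝ => S n t ω)) μ)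
    (hlaplace : ∀ n : ℕ, ∀ t : ℝ, 0 ≤ t → ∀ l : ℝ, 0 ≤ l →
      ∫ ω, Real.exp (-(l * S n t ω)) ∂μ = Real.exp (-(t * laplaceExpF Λ c l)))
    (x : ℝ) (hx : 0 ≤ x)
    (Z : ℕ → Ω → ℝ) (hZmeas : ∀ n, Measurable (Z n)) (hZ0 : ∀ ω, Z 0 ω = x)
    (hZrec : ∀ n ω, Z (n + 1) ω = S (n + 1) (Z n ω) ω) :
    μ {ω | Tendsto (fun n => Z n ω) atTop (nhds 0)} = ENNReal.ofReal (Real.exp (-(η * x))) ∧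
    ∀ᵐ ω ∂μ, (Summable (fun n => Z n ω) ↔ Tendsto (fun n => Z n ω) atTop (nhds 0)) := by
  have hJ : IsJirinaProcess μ (laplaceExpF Λ c) S x Z :=
    ⟨hSmeas, hSnonneg, hSmono, hindep, hlaplace, hx, hZmeas, hZ0, hZrec⟩
  have hG := laplaceExpF_nonneg (Λ := Λ) hc
  have hupper := hJ.measure_tendsto_zero_le hG hη.1.1 hη.1.2
  have hlower := hJ.expNeg_le_measure_summable_of_forall_lt hG (monotoneOn_laplaceExpF hΛ hc)
    fun u hu => laplaceExpF_lt_self hΛ hη hu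
  have hsub : {ω | Summable fun n => Z n ω} ⊆ {ω | Tendsto (fun n => Z n ω) atTop (𝓝 0)} :=
    fun ω hω => hω.tendsto_atTop_zero
  have hext := le_antisymm hupper (hlower.trans (measure_mono hsub))
  refine ⟨hext, ?_⟩
  filter_upwards [ae_eq_of_subset_of_measure_ge hsub (hext ▸ hlower)
    (measurableSet_summable_of_nonneg hZmeas hJ.nonneg).nullMeasurableSet
    (measure_ne_top μ _)] with ω hω
  exact iff_of_eq hω

theorem stmt_5 {Ω : Type*} [MeasurableSpace Ω] (μ : Measure Ω) [IsProbabilityMeasure μ]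
    (Λ : Measure ℝ) (c : ℝ) (hc : 0 ≤ c)
    (hΛ : (∫⁻ r in Set.Ioi (0 : ℝ), ENNReal.ofReal (min 1 r) ∂Λ) ≠ ⊤)
    (η : ℝ) (hη : IsGreatest {l : ℝ | 0 ≤ l ∧ laplaceExpF Λ c l = l} η)
    (S : ℕ → ℝ → Ω → ℝ)
    (hSmeas : ∀ n, Measurable (fun ω => (fun t : ℝ => S n t ω)))
    (hS0 : ∀ n ω, S n 0 ω = 0)
    (hSmono : ∀ n ω, Monotone (fun t => S n t ω))
    (hSnonneg : ∀ n t ω, 0 ≤ t → 0 ≤ S n t ω)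
    (hindep : iIndepFun
      (fun n ω => (fun t : ℝ => S n t ω)) μ)
    (hident : ∀ i j : ℕ, IdentDistrib (fun ω => (fun t : ℝ => S i t ω))
      (fun ω => (fun t : ℝ => S j t ω)) μ μ)
    (hlaplace : ∀ n : ℕ, ∀ t : ℝ, 0 ≤ t → ∀ l : ℝ, 0 ≤ l →
      ∫ ω, Real.exp (-(l * S n t ω)) ∂μ = Real.exp (-(t * laplaceExpF Λ c l)))
    (x : ℝ) (hx : 0 ≤ x)
    (Z : ℕ → Ω → ℝ) (hZmeas : ∀ n, Measurable (Z n)) (hZ0 : ∀ ω, Z 0 ω = x)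
    (hZrec : ∀ n ω, Z (n + 1) ω = S (n + 1) (Z n ω) ω) :
    μ {ω | Tendsto (fun n => Z n ω) atTop (nhds 0)} = ENNReal.ofReal (Real.exp (-(η * x))) ∧
    ∀ᵐ ω ∂μ, (Summable (fun n => Z n ω) ↔ Tendsto (fun n => Z n ω) atTop (nhds 0)) :=
  stmt_5_general μ Λ c hc hΛ η hη S hSmeas hSmono hSnonneg hindep hlaplace x hx Z hZmeas hZ0 hZrec
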